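/- arXiv:2403.13104 — 3 statements merged into one kernel-verified Lean document; each statement's English description precedes it below -/
import Mathlib

section
/- Let λ ∈ ℝ and ρ ∈ (0, 1]. Then for every continuously differentiable compactly supported h : ℝ → ℂ, ∫_ℝ |h(y)|² dy ≤ ρ^{-1} ∫_ℝ |y² - λ| |h(y)|² dy + 8 √ρ ‖h‖_{L²(ℝ)} ‖h'‖_{L²(ℝ)}. -/
/-!
Split `ℝ` along `S = {y | |y² - λ| ≤ ρ}`. Off `S` the weight `|y² - λ| / ρ` exceeds `1`, so that
part of `‖h‖²` is controlled by the weighted integral. The set `S` lies in two intervals of length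
at most `√(2ρ)`, and on it `‖h‖²` is bounded by the Agmon inequality
`‖h x‖² ≤ 2 ‖h‖₂ ‖h'‖₂`, which comes from `‖h x‖² = ∫_{-∞}^x 2 ⟪h, h'⟫` and Cauchy–Schwarz.
-/

open MeasureTheory

section

variable {α : Type*} [MeasurableSpace α] {μ : Measure α}

theorem integral_mul_le_sqrt_integral_sq_mul_sqrt_integral_sq {f g : α → ℝ}
    (hf0 : 0 ≤ᵐ[μ] f) (hg0 : 0 ≤ᵐ[μ] g) (hf : MemLp f 2 μ) (hg : MemLp g 2 μ) :
    ∫ x, f x * g x ∂μ ≤ √(∫ x, f x ^ 2 ∂μ) * √(∫ x, g x ^ 2 ∂μ) := by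
  have := integral_mul_le_Lp_mul_Lq_of_nonneg (p := 2) (q := 2) (by constructor <;> norm_num)
    hf0 hg0 (by simpa using hf) (by simpa using hg)
  simpa [Real.sqrt_eq_rpow] using this

theorem integral_le_inv_mul_integral_mul_add_mul_measureReal {f w : α → ℝ} {ρ C : ℝ}
    (hρ : 0 < ρ) (hw : Measurable w) (hw0 : ∀ x, 0 ≤ w x) (hf0 : ∀ x, 0 ≤ f x)
    (hfC : ∀ x, f x ≤ C) (hf : Integrable f μ) (hwf : Integrable (fun x => w x * f x) μ)
    (hS : μ {x | w x ≤ ρ} ≠ ⊤) :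
    ∫ x, f x ∂μ ≤ ρ⁻¹ * ∫ x, w x * f x ∂μ + C * μ.real {x | w x ≤ ρ} := by
  set S := {x | w x ≤ ρ}
  have hSm : MeasurableSet S := measurableSet_le hw measurable_const
  have hnear : ∫ x in S, f x ∂μ ≤ C * μ.real S :=
    calc ∫ x in S, f x ∂μ ≤ ∫ x in S, C ∂μ :=
          setIntegral_mono_on hf.integrableOn (integrableOn_const hS) hSm fun x _ => hfC x
      _ = C * μ.real S := by rw [setIntegral_const, smul_eq_mul, mul_comm]
  have hfar : ∫ x in Sᶜ, f x ∂μ ≤ ρ⁻¹ * ∫ x, w x * f x ∂μ :=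
    calc ∫ x in Sᶜ, f x ∂μ ≤ ∫ x in Sᶜ, ρ⁻¹ * (w x * f x) ∂μ := by
          refine setIntegral_mono_on hf.integrableOn (hwf.const_mul _).integrableOn hSm.compl
            fun x hx => ?_
          rw [← mul_assoc, ← div_eq_inv_mul]
          exact le_mul_of_one_le_left (hf0 x) ((one_le_div hρ).2 (le_of_lt (not_le.1 hx)))
      _ ≤ ρ⁻¹ * ∫ x, w x * f x ∂μ := by
          rw [integral_const_mul]
          exact mul_le_mul_of_nonneg_left (setIntegral_le_integral hwf
            (.of_forall fun x => mul_nonneg (hw0 x) (hf0 x))) (inv_nonneg.2 hρ.le)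
  rw [← integral_add_compl hSm hf]
  linarith

end

theorem HasCompactSupport.norm_sq {α E : Type*} [TopologicalSpace α] [NormedAddCommGroup E]
    {f : α → E} (hf : HasCompactSupport f) : HasCompactSupport (‖f ·‖ ^ 2) :=
  hf.comp_left (g := fun v : E => ‖v‖ ^ 2) (by simp)

theorem sq_norm_le_two_mul_sqrt_integral_mul_sqrt_integral
    {E : Type*} [NormedAddCommGroup E] [InnerProductSpace ℝ E] [CompleteSpace E]
    {f : ℝ → E} (hf : ContDiff ℝ 1 f) (hsupp : HasCompactSupport f) (x : ℝ) :
    ‖f x‖ ^ 2 ≤ 2 * √(∫ y, ‖f y‖ ^ 2) * √(∫ y, ‖deriv f y‖ ^ 2) := by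
  have hderiv_sq : deriv (‖f ·‖ ^ 2) = fun y => 2 * inner ℝ (f y) (deriv f y) :=
    funext fun y => (hf.differentiable one_ne_zero y).hasDerivAt.norm_sq.deriv
  have hsq : ContDiff ℝ 1 (‖f ·‖ ^ 2) := hf.norm_sq ℝ
  have hint : Integrable (deriv (‖f ·‖ ^ 2)) :=
    (hsq.continuous_deriv le_rfl).integrable_of_hasCompactSupport hsupp.norm_sq.deriv
  have hmem : MemLp (‖f ·‖) 2 := (hf.continuous.memLp_of_hasCompactSupport hsupp).norm
  have hmem' : MemLp (‖deriv f ·‖) 2 :=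
    ((hf.continuous_deriv le_rfl).memLp_of_hasCompactSupport hsupp.deriv).norm
  calc ‖f x‖ ^ 2 = ∫ y in Set.Iic x, deriv (‖f ·‖ ^ 2) y :=
        (hsupp.norm_sq.integral_Iic_deriv_eq hsq x).symm
    _ ≤ ∫ y, |deriv (‖f ·‖ ^ 2) y| :=
        (le_abs_self _).trans <| abs_integral_le_integral_abs.trans <|
          setIntegral_le_integral hint.abs (.of_forall fun _ => abs_nonneg _)
    _ ≤ ∫ y, 2 * (‖f y‖ * ‖deriv f y‖) := by
        refine integral_mono hint.abs ((hmem.integrable_mul hmem').const_mul 2) fun y => ?_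
        rw [hderiv_sq, abs_mul, abs_two]
        exact mul_le_mul_of_nonneg_left (abs_real_inner_le_norm _ _) zero_le_two
    _ ≤ 2 * √(∫ y, ‖f y‖ ^ 2) * √(∫ y, ‖deriv f y‖ ^ 2) := by
        rw [integral_const_mul, mul_assoc]
        gcongr
        exact integral_mul_le_sqrt_integral_sq_mul_sqrt_integral_sq
          (.of_forall fun _ => norm_nonneg _) (.of_forall fun _ => norm_nonneg _) hmem hmem'

theorem sub_le_sqrt_of_sq_sub_sq_le {a b c : ℝ} (ha : 0 ≤ a) (h : b ^ 2 - a ^ 2 ≤ c) :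
    b - a ≤ √c := by
  rcases le_total b a with hba | hab
  · exact (sub_nonpos.2 hba).trans (Real.sqrt_nonneg c)
  · exact Real.le_sqrt_of_sq_le (by nlinarith)

theorem Real.volume_setOf_abs_sq_sub_le (lam : ℝ) {ρ : ℝ} (hρ : 0 ≤ ρ) :
    volume {y : ℝ | |y ^ 2 - lam| ≤ ρ} ≤ ENNReal.ofReal (4 * √ρ) := by
  -- `√` of a negative number is `0`, which is exactly the inner radius needed when `lam < ρ`.
  set a := √(lam - ρ)
  set b := √(lam + ρ)
  have hsub : {y : ℝ | |y ^ 2 - lam| ≤ ρ} ⊆ Set.Icc (-b) (-a) ∪ Set.Icc a b := by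
    intro y (hy : |y ^ 2 - lam| ≤ ρ)
    obtain ⟨hlo, hhi⟩ := abs_le.1 hy
    have ha : a ≤ |y| := (Real.sqrt_le_left (abs_nonneg y)).2 (by rw [sq_abs]; linarith)
    have hb : |y| ≤ b := Real.abs_le_sqrt (by linarith)
    rcases le_total 0 y with hy0 | hy0
    · rw [abs_of_nonneg hy0] at ha hb
      exact Or.inr ⟨ha, hb⟩
    · rw [abs_of_nonpos hy0] at ha hb
      exact Or.inl ⟨by linarith, by linarith⟩
  have hba : b - a ≤ 2 * √ρ :=
    calc b - a ≤ √(2 * ρ) := by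
          refine sub_le_sqrt_of_sq_sub_sq_le (Real.sqrt_nonneg _) ?_
          rw [Real.sq_sqrt', Real.sq_sqrt', sub_le_iff_le_add]
          exact max_le (by linarith [le_max_left (lam - ρ) 0])
            (by linarith [le_max_right (lam - ρ) 0])
      _ ≤ 2 * √ρ := by
          rw [Real.sqrt_mul zero_le_two]
          gcongr
          exact (Real.sqrt_le_left zero_le_two).2 (by norm_num)
  calc volume {y : ℝ | |y ^ 2 - lam| ≤ ρ}
      ≤ volume (Set.Icc (-b) (-a)) + volume (Set.Icc a b) :=
        (measure_mono hsub).trans (measure_union_le _ _)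
    _ = ENNReal.ofReal (b - a) + ENNReal.ofReal (b - a) := by
        rw [Real.volume_Icc, Real.volume_Icc, neg_sub_neg]
    _ ≤ ENNReal.ofReal (2 * √ρ) + ENNReal.ofReal (2 * √ρ) := by gcongr
    _ = ENNReal.ofReal (4 * √ρ) := by
        rw [← ENNReal.ofReal_add (by positivity) (by positivity)]
        ring_nf

theorem stmt_7_general (lam ρ : ℝ) (hρ0 : 0 < ρ)
    (h : ℝ → ℂ) (hreg : ContDiff ℝ 1 h) (hsupp : HasCompactSupport h) :
    (∫ y : ℝ, ‖h y‖ ^ 2) ≤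
      ρ⁻¹ * (∫ y : ℝ, |y ^ 2 - lam| * ‖h y‖ ^ 2) +
        8 * Real.sqrt ρ * Real.sqrt (∫ y : ℝ, ‖h y‖ ^ 2) *
          Real.sqrt (∫ y : ℝ, ‖deriv h y‖ ^ 2) := by
  have hint : Integrable (‖h ·‖ ^ 2) :=
    (hreg.continuous.norm.pow 2).integrable_of_hasCompactSupport hsupp.norm_sq
  have hint_weighted : Integrable fun y : ℝ => |y ^ 2 - lam| * ‖h y‖ ^ 2 :=
    (by fun_prop : Continuous _).integrable_of_hasCompactSupport hsupp.norm_sq.mul_left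
  have hvol := Real.volume_setOf_abs_sq_sub_le lam hρ0.le
  calc (∫ y : ℝ, ‖h y‖ ^ 2)
      ≤ ρ⁻¹ * (∫ y : ℝ, |y ^ 2 - lam| * ‖h y‖ ^ 2) +
          2 * √(∫ y, ‖h y‖ ^ 2) * √(∫ y, ‖deriv h y‖ ^ 2) *
            volume.real {y : ℝ | |y ^ 2 - lam| ≤ ρ} :=
        integral_le_inv_mul_integral_mul_add_mul_measureReal hρ0 (by fun_prop)
          (fun _ => abs_nonneg _) (fun _ => by positivity)
          (sq_norm_le_two_mul_sqrt_integral_mul_sqrt_integral hreg hsupp) hint hint_weighted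
          (ne_top_of_le_ne_top ENNReal.ofReal_ne_top hvol)
    _ ≤ ρ⁻¹ * (∫ y : ℝ, |y ^ 2 - lam| * ‖h y‖ ^ 2) +
          2 * √(∫ y, ‖h y‖ ^ 2) * √(∫ y, ‖deriv h y‖ ^ 2) * (4 * √ρ) := by
        gcongr
        exact ENNReal.toReal_le_of_le_ofReal (by positivity) hvol
    _ = _ := by ring

/-- Spectral gap inequality near a non-degenerate critical point. -/
theorem stmt_7 (lam ρ : ℝ) (hρ0 : 0 < ρ) (hρ1 : ρ ≤ 1)
    (h : ℝ → ℂ) (hreg : ContDiff ℝ 1 h) (hsupp : HasCompactSupport h) :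
    (∫ y : ℝ, ‖h y‖ ^ 2) ≤
      ρ⁻¹ * (∫ y : ℝ, |y ^ 2 - lam| * ‖h y‖ ^ 2) +
        8 * Real.sqrt ρ * Real.sqrt (∫ y : ℝ, ‖h y‖ ^ 2) *
          Real.sqrt (∫ y : ℝ, ‖deriv h y‖ ^ 2) :=
  stmt_7_general lam ρ hρ0 h hreg hsupp
end

section
/- For every s ∈ [0, 2] there is a constant C_s such that for all δ > 0, all k ≥ 1/δ, and all y ∈ ℝ: ∫_ℝ k e^{-k|y - z|} (|z| + δ)^{-s} dz ≤ C_s (|y| + δ)^{-s}. -/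
/-!
The weight is slowly varying at scale `δ`: `|y| + δ ≤ (1 + k|y - z|)(|z| + δ)` once `kδ ≥ 1`, so
`(|z| + δ)^{-s} ≤ (1 + k|y - z|)^s (|y| + δ)^{-s}`. For `s ≤ 2` the polynomial factor
`(1 + k|y - z|)^s` is absorbed by half of the exponential decay of the kernel, and the remaining
kernel `k e^{-k|y - z|/2}` has integral `4`.
-/

open MeasureTheory Real

theorem integral_exp_neg_abs : ∫ x : ℝ, exp (-|x|) = 2 := by
  rw [integral_comp_abs (f := fun x => exp (-x)), integral_exp_neg_Ioi_zero, mul_one]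

theorem integral_exp_neg_mul_abs_sub {a : ℝ} (ha : 0 < a) (y : ℝ) :
    ∫ z : ℝ, exp (-(a * |y - z|)) = 2 / a := by
  have hscale : ∫ z : ℝ, exp (-|a * z|) = a⁻¹ * 2 := by
    rw [Measure.integral_comp_mul_left (fun x => exp (-|x|)), integral_exp_neg_abs,
      abs_of_pos (inv_pos.mpr ha), smul_eq_mul]
  calc ∫ z : ℝ, exp (-(a * |y - z|))
      = ∫ z : ℝ, exp (-|a * z|) := by
        simp only [abs_mul, abs_of_pos ha]
        exact integral_sub_left_eq_self (fun z => exp (-(a * |z|))) volume y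
    _ = 2 / a := by rw [hscale, inv_mul_eq_div]

theorem integrable_exp_neg_mul_abs_sub {a : ℝ} (ha : 0 < a) (y : ℝ) :
    Integrable fun z : ℝ => exp (-(a * |y - z|)) :=
  .of_integral_ne_zero (by rw [integral_exp_neg_mul_abs_sub ha]; positivity)

theorem norm_add_le_one_add_mul_norm_sub_mul {E : Type*} [SeminormedAddCommGroup E]
    {k δ : ℝ} (hk : 0 ≤ k) (hkδ : 1 ≤ k * δ) (y z : E) :
    ‖y‖ + δ ≤ (1 + k * ‖y - z‖) * (‖z‖ + δ) := by
  have htriangle : ‖y‖ ≤ ‖z‖ + ‖y - z‖ := by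
    simpa only [add_comm] using norm_le_insert' y z
  nlinarith [norm_nonneg z, norm_nonneg (y - z), mul_nonneg hk (norm_nonneg (y - z))]

theorem rpow_neg_le_rpow_mul_rpow_neg {a b c s : ℝ} (ha : 0 < a) (hb : 0 < b)
    (hba : b ≤ c * a) (hs : 0 ≤ s) : a ^ (-s) ≤ c ^ s * b ^ (-s) := by
  have hc : 0 ≤ c := nonneg_of_mul_nonneg_left (hb.le.trans hba) ha
  have hpow : b ^ s ≤ c ^ s * a ^ s := by
    rw [← mul_rpow hc ha.le]
    exact rpow_le_rpow hb.le hba hs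
  rw [rpow_neg ha.le, rpow_neg hb.le, ← div_eq_mul_inv,
    inv_le_iff_one_le_mul₀ (rpow_pos_of_pos ha s), div_mul_eq_mul_div,
    le_div_iff₀ (rpow_pos_of_pos hb s), one_mul]
  exact hpow

theorem one_add_rpow_le_exp {s t : ℝ} (hs : s ≤ 2) (ht : 0 ≤ t) :
    (1 + t) ^ s ≤ 16 * exp (t / 2) := by
  have hlin : 1 + t ≤ 4 * exp (t / 4) := by linarith [add_one_le_exp (t / 4)]
  calc (1 + t) ^ s
      ≤ (1 + t) ^ (2 : ℝ) := rpow_le_rpow_of_exponent_le (by linarith) hs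
    _ = (1 + t) ^ 2 := rpow_two _
    _ ≤ (4 * exp (t / 4)) ^ 2 := pow_le_pow_left₀ (by linarith) hlin 2
    _ = 16 * exp (t / 2) := by rw [mul_pow, ← exp_nat_mul]; ring_nf

theorem kernel_mul_weight_le {k δ s : ℝ} (hδ : 0 < δ) (hk : 0 ≤ k) (hkδ : 1 ≤ k * δ)
    (hs0 : 0 ≤ s) (hs2 : s ≤ 2) (y z : ℝ) :
    k * exp (-(k * |y - z|)) * (|z| + δ) ^ (-s) ≤
      16 * (|y| + δ) ^ (-s) * (k * exp (-(k / 2 * |y - z|))) := by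
  set t := k * |y - z|
  have hweight : (|z| + δ) ^ (-s) ≤ (1 + t) ^ s * (|y| + δ) ^ (-s) := by
    refine rpow_neg_le_rpow_mul_rpow_neg (by positivity) (by positivity) ?_ hs0
    simpa only [Real.norm_eq_abs] using norm_add_le_one_add_mul_norm_sub_mul hk hkδ y z
  have hexp : exp (-t) * exp (t / 2) = exp (-(k / 2 * |y - z|)) := by
    rw [← exp_add]; congr 1; ring
  calc k * exp (-t) * (|z| + δ) ^ (-s)
      ≤ k * exp (-t) * ((1 + t) ^ s * (|y| + δ) ^ (-s)) := by gcongr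
    _ ≤ k * exp (-t) * (16 * exp (t / 2) * (|y| + δ) ^ (-s)) := by
        gcongr
        exact one_add_rpow_le_exp hs2 (by positivity)
    _ = 16 * (|y| + δ) ^ (-s) * (k * (exp (-t) * exp (t / 2))) := by ring
    _ = 16 * (|y| + δ) ^ (-s) * (k * exp (-(k / 2 * |y - z|))) := by rw [hexp]

/-- Convolution with k e^{-k|·|} preserves the weights (|z|+δ)^{-s} when k ≥ 1/δ. -/
theorem stmt_9 (s : ℝ) (hs0 : 0 ≤ s) (hs2 : s ≤ 2) :
    ∃ C : ℝ, 0 < C ∧ ∀ δ : ℝ, 0 < δ → ∀ k : ℝ, 1 / δ ≤ k → ∀ y : ℝ,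
      (∫ z : ℝ, k * Real.exp (-(k * |y - z|)) * (|z| + δ) ^ (-s)) ≤
        C * (|y| + δ) ^ (-s) := by
  refine ⟨64, by norm_num, fun δ hδ k hk y => ?_⟩
  have hk0 : 0 < k := lt_of_lt_of_le (by positivity) hk
  have hkδ : 1 ≤ k * δ := by rwa [div_le_iff₀ hδ] at hk
  calc (∫ z : ℝ, k * exp (-(k * |y - z|)) * (|z| + δ) ^ (-s))
      ≤ ∫ z : ℝ, 16 * (|y| + δ) ^ (-s) * (k * exp (-(k / 2 * |y - z|))) :=
        integral_mono_of_nonneg (ae_of_all _ fun z => by positivity)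
          (((integrable_exp_neg_mul_abs_sub (half_pos hk0) y).const_mul k).const_mul _)
          (ae_of_all _ (kernel_mul_weight_le hδ hk0.le hkδ hs0 hs2 y))
    _ = 64 * (|y| + δ) ^ (-s) := by
        rw [integral_const_mul, integral_const_mul,
          integral_exp_neg_mul_abs_sub (half_pos hk0)]
        field_simp
        ring
end

section
/- Let c > 0, λ ≤ 0, and let k, α, ε be arbitrary real numbers. Suppose F : ℝ → ℂ is a Schwartz function, set W := F'' - k² F, and assume that ε W''(Y) - α W(Y) - i(c Y²/2 - λ) W(Y) + i c F(Y) = 0 for all Y ∈ ℝ. Then F ≡ 0. -/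
/-!
Pair the equation with `W` in `L²`. After integration by parts, `⟪W, W''⟫ = -‖W'‖²` and
`⟪W, W⟫` are real, so the imaginary part of the pairing reads
`∫ (c Y²/2 - λ) |W|² = c · Re ⟪W, F⟫ = -c (‖F'‖² + k² ‖F‖²)`.
The left side is nonnegative since `λ ≤ 0` and the right side is nonpositive since `c > 0`,
so `F' = 0`; a Schwartz function with vanishing derivative is zero.
-/

open MeasureTheory SchwartzMap
open scoped ENNReal

variable {V : Type*} [NormedAddCommGroup V] [InnerProductSpace ℂ V]

noncomputable def innerRealBilin : V →L[ℝ] V →L[ℝ] ℂ :=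
  LinearMap.mkContinuous₂
    (LinearMap.mk₂ ℝ (fun x y => inner ℂ x y) inner_add_left (fun r x y => by simp)
      inner_add_right (fun r x y => by simp))
    1 (fun x y => by simpa using norm_inner_le_norm (𝕜 := ℂ) x y)

@[simp]
theorem innerRealBilin_apply (x y : V) : innerRealBilin x y = inner ℂ x y := rfl

namespace SchwartzMap

theorem inner_toLp_deriv_right (f g : 𝓢(ℝ, V)) :
    inner ℂ (f.toLp 2) ((derivCLM ℂ V g).toLp 2)
      = -inner ℂ ((derivCLM ℂ V f).toLp 2) (g.toLp 2) := by
  simpa using integral_bilinear_deriv_right_eq_neg_left f g innerRealBilin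

theorem inner_toLp_deriv_deriv_self (f : 𝓢(ℝ, V)) :
    inner ℂ (f.toLp 2) ((derivCLM ℂ V (derivCLM ℂ V f)).toLp 2)
      = -((‖(derivCLM ℂ V f).toLp 2‖ ^ 2 : ℝ) : ℂ) := by
  rw [inner_toLp_deriv_right, inner_self_eq_norm_sq_to_K]
  simp

theorem inner_toLp_deriv_deriv_sub_smul_self (f : 𝓢(ℝ, V)) (k : ℝ) :
    inner ℂ ((derivCLM ℂ V (derivCLM ℂ V f) - (k : ℂ) ^ 2 • f).toLp 2) (f.toLp 2)
      = -((‖(derivCLM ℂ V f).toLp 2‖ ^ 2 + k ^ 2 * ‖f.toLp 2‖ ^ 2 : ℝ) : ℂ) := by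
  simp only [← toLpCLM_apply (𝕜 := ℂ), map_sub, map_smul, inner_sub_left, inner_smul_left]
  rw [← inner_conj_symm, toLpCLM_apply, toLpCLM_apply, inner_toLp_deriv_deriv_self,
    inner_self_eq_norm_sq_to_K]
  simp
  ring

theorem re_inner_toLp_smulLeftCLM_self_nonneg {E : Type*} [NormedAddCommGroup E]
    [NormedSpace ℝ E] [FiniteDimensional ℝ E] [MeasurableSpace E] [BorelSpace E]
    (μ : Measure E) [μ.HasTemperateGrowth] {g : E → ℝ} (hg : g.HasTemperateGrowth)
    (hg_nonneg : ∀ x, 0 ≤ g x) (f : 𝓢(E, V)) :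
    0 ≤ RCLike.re (inner ℂ (f.toLp 2 μ) ((smulLeftCLM V g f).toLp 2 μ)) := by
  have hpointwise : ∀ x, inner ℂ (f x) (smulLeftCLM V g f x) = ((g x * ‖f x‖ ^ 2 : ℝ) : ℂ) :=
    fun x => by
      rw [smulLeftCLM_apply_apply hg, ← Complex.coe_smul, inner_smul_right,
        inner_self_eq_norm_sq_to_K]
      push_cast
      rfl
  rw [inner_toL2_toL2_eq f (smulLeftCLM V g f) μ, integral_congr_ae (ae_of_all _ hpointwise),
    integral_complex_ofReal]
  simpa using integral_nonneg fun x => mul_nonneg (hg_nonneg x) (sq_nonneg ‖f x‖)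

theorem re_inner_toLp_eq_of_smul_deriv_deriv_sub (ε α c : ℝ) (W G F : 𝓢(ℝ, V))
    (h : (ε : ℂ) • derivCLM ℂ V (derivCLM ℂ V W) - (α : ℂ) • W - Complex.I • G
      + (Complex.I * c) • F = 0) :
    RCLike.re (inner ℂ (W.toLp 2) (G.toLp 2)) = c * RCLike.re (inner ℂ (W.toLp 2) (F.toLp 2)) := by
  have hpair := congrArg (fun H => inner ℂ (W.toLp 2) (H.toLp 2)) h
  simp only [← toLpCLM_apply (𝕜 := ℂ), map_add, map_sub, map_smul, map_zero, inner_add_right,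
    inner_sub_right, inner_smul_right, inner_zero_right] at hpair
  simp only [toLpCLM_apply] at hpair
  have hWW : (inner ℂ (W.toLp 2) (W.toLp 2)).im = 0 := inner_self_im (𝕜 := ℂ) _
  rw [inner_toLp_deriv_deriv_self] at hpair
  have him := congrArg Complex.im hpair
  simp only [Complex.add_im, Complex.sub_im, Complex.mul_im, Complex.mul_re, Complex.neg_im, hWW,
    Complex.ofReal_im, Complex.ofReal_re, Complex.I_re, Complex.I_im, Complex.zero_im] at him
  change (inner ℂ (W.toLp 2) (G.toLp 2)).re = c * (inner ℂ (W.toLp 2) (F.toLp 2)).re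
  linarith

theorem norm_toLp_eq_zero_iff {E F : Type*} [NormedAddCommGroup E] [NormedSpace ℝ E]
    [NormedAddCommGroup F] [NormedSpace ℝ F] [MeasurableSpace E] [OpensMeasurableSpace E]
    [SecondCountableTopologyEither E F] {p : ℝ≥0∞} [Fact (1 ≤ p)] (μ : Measure E)
    [μ.HasTemperateGrowth] [μ.IsOpenPosMeasure] {f : 𝓢(E, F)} :
    ‖f.toLp p μ‖ = 0 ↔ f = 0 := by
  rw [norm_eq_zero, ← (injective_toLp p μ).eq_iff]
  change _ ↔ _ = toLpCLM ℝ F p μ 0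
  rw [map_zero]

theorem eq_zero_of_deriv_eq_zero {F : Type*} [NormedAddCommGroup F] [NormedSpace ℝ F]
    (f : 𝓢(ℝ, F)) (hf : ∀ x, deriv f x = 0) : f = 0 := by
  ext x
  have hconst : (f : ℝ → F) = fun _ => f x :=
    funext fun y => is_const_of_deriv_eq_zero f.differentiable hf y x
  have hdecay := ZeroAtInftyContinuousMapClass.zero_at_infty f
  rw [hconst] at hdecay
  exact tendsto_nhds_unique tendsto_const_nhds hdecay

end SchwartzMap

/-- Rigidity of the rescaled Orr–Sommerfeld operator around Poiseuille flow. -/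
theorem stmt_16 (c lam k α ε : ℝ) (hc : 0 < c) (hlam : lam ≤ 0)
    (F : SchwartzMap ℝ ℂ)
    (heq : ∀ Y : ℝ,
      (ε : ℂ) * deriv (deriv (fun t => deriv (deriv (⇑F)) t - (k : ℂ) ^ 2 * F t)) Y
        - (α : ℂ) * (deriv (deriv (⇑F)) Y - (k : ℂ) ^ 2 * F Y)
        - Complex.I * ((c * Y ^ 2 / 2 - lam : ℝ) : ℂ) *
            (deriv (deriv (⇑F)) Y - (k : ℂ) ^ 2 * F Y)
        + Complex.I * (c : ℂ) * F Y = 0) :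
    ∀ Y, F Y = 0 := by
  set D := derivCLM ℂ ℂ
  set U : ℝ → ℝ := fun x => c * x ^ 2 / 2 - lam
  have hU : U.HasTemperateGrowth := by simp_rw [U, div_eq_mul_inv]; fun_prop
  have hU_nonneg : ∀ x, 0 ≤ U x := fun x => by simp only [U]; nlinarith [sq_nonneg x]
  set W : 𝓢(ℝ, ℂ) := D (D F) - ((k : ℂ) ^ 2) • F
  have hW : (ε : ℂ) • D (D W) - (α : ℂ) • W - Complex.I • smulLeftCLM ℂ U W
      + (Complex.I * c) • F = 0 := by
    have hWY : ∀ Y, W Y = deriv (deriv F) Y - (k : ℂ) ^ 2 * F Y := fun Y => rfl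
    have hW'' : ∀ Y, D (D W) Y
        = deriv (deriv (fun t => deriv (deriv F) t - (k : ℂ) ^ 2 * F t)) Y := fun Y => rfl
    ext Y
    simp only [add_apply, sub_apply, smul_apply, smulLeftCLM_apply_apply hU, zero_apply,
      smul_eq_mul, hWY, hW'', U, Complex.real_smul]
    linear_combination heq Y
  have hbalance := re_inner_toLp_eq_of_smul_deriv_deriv_sub ε α c W _ F hW
  have hpotential := re_inner_toLp_smulLeftCLM_self_nonneg volume hU hU_nonneg W
  have hWF : inner ℂ (W.toLp 2) (F.toLp 2)
      = -((‖(D F).toLp 2‖ ^ 2 + k ^ 2 * ‖F.toLp 2‖ ^ 2 : ℝ) : ℂ) :=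
    inner_toLp_deriv_deriv_sub_smul_self F k
  rw [hWF] at hbalance
  simp only [RCLike.re_to_complex, Complex.neg_re, Complex.ofReal_re] at hbalance hpotential
  have hDF : ‖(D F).toLp 2‖ = 0 := by
    have : 0 ≤ c * (k ^ 2 * ‖F.toLp 2‖ ^ 2) := by positivity
    have hcDF : c * ‖(D F).toLp 2‖ ^ 2 ≤ 0 := by linarith
    exact pow_eq_zero_iff two_ne_zero |>.mp
      (le_antisymm (nonpos_of_mul_nonpos_right hcDF hc) (by positivity))
  rw [norm_toLp_eq_zero_iff] at hDF
  intro Y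
  rw [eq_zero_of_deriv_eq_zero F fun x => congrArg (· x) hDF]
  rfl
end
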